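/- L* + R derives Π → A if and only if there exists a subset B of G_R such that !L* derives !B, Π → A (deduction-style embedding of Buszkowski-rule extensions into !L*). -/
import Mathlib


/-- Formulae (types) of the Lambek calculus with a modality:
`var` = primitive type, `div B A` = B / A, `ldiv A B` = A \ B, `bang A` = !A. -/
inductive Fm : Type
  | var : ℕ → Fm
  | div : Fm → Fm → Fm
  | ldiv : Fm → Fm → Fm
  | bang : Fm → Fm
  deriving DecidableEq

open Fm

/-- A Buszkowski rule: either (B₁) "from Φ₁ → p and Φ₂ → q derive Φ₁, Φ₂ → r"
or (B₂) "from Φ, q → p derive Φ → r", for fixed variables p, q, r. -/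
inductive BRule : Type
  | b1 (p q r : ℕ)
  | b2 (p q r : ℕ)
  deriving DecidableEq

/-- L* + R: the Lambek calculus L* (empty antecedents allowed) extended with
a finite set R of Buszkowski rules. -/
inductive LStarR (R : Finset BRule) : List Fm → Fm → Prop
  | ax (A : Fm) : LStarR R [A] A
  | divL (Γ Δ₁ Δ₂ : List Fm) (A B C : Fm) :
      LStarR R Γ A → LStarR R (Δ₁ ++ B :: Δ₂) C →
      LStarR R (Δ₁ ++ div B A :: (Γ ++ Δ₂)) C
  | divR (Γ : List Fm) (A B : Fm) :
      LStarR R (Γ ++ [A]) B → LStarR R Γ (div B A)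
  | ldivL (Γ Δ₁ Δ₂ : List Fm) (A B C : Fm) :
      LStarR R Γ A → LStarR R (Δ₁ ++ B :: Δ₂) C →
      LStarR R (Δ₁ ++ Γ ++ ldiv A B :: Δ₂) C
  | ldivR (Γ : List Fm) (A B : Fm) :
      LStarR R (A :: Γ) B → LStarR R Γ (ldiv A B)
  | b1 (p q r : ℕ) (Φ₁ Φ₂ : List Fm) :
      BRule.b1 p q r ∈ R → LStarR R Φ₁ (var p) → LStarR R Φ₂ (var q) →
      LStarR R (Φ₁ ++ Φ₂) (var r)
  | b2 (p q r : ℕ) (Φ : List Fm) :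
      BRule.b2 p q r ∈ R → LStarR R (Φ ++ [var q]) (var p) →
      LStarR R Φ (var r)

/-- The calculus !L*: the Lambek calculus L* (with empty antecedents allowed)
extended with a relevant modality `!` with rules (!→), (→!), (perm₁), (perm₂), (contr). -/
inductive BangL : List Fm → Fm → Prop
  | ax (A : Fm) : BangL [A] A
  | divL (Γ Δ₁ Δ₂ : List Fm) (A B C : Fm) :
      BangL Γ A → BangL (Δ₁ ++ B :: Δ₂) C →
      BangL (Δ₁ ++ div B A :: (Γ ++ Δ₂)) C
  | divR (Γ : List Fm) (A B : Fm) :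
      BangL (Γ ++ [A]) B → BangL Γ (div B A)
  | ldivL (Γ Δ₁ Δ₂ : List Fm) (A B C : Fm) :
      BangL Γ A → BangL (Δ₁ ++ B :: Δ₂) C →
      BangL (Δ₁ ++ Γ ++ ldiv A B :: Δ₂) C
  | ldivR (Γ : List Fm) (A B : Fm) :
      BangL (A :: Γ) B → BangL Γ (ldiv A B)
  | bangL (Γ₁ Γ₂ : List Fm) (A C : Fm) :
      BangL (Γ₁ ++ A :: Γ₂) C → BangL (Γ₁ ++ bang A :: Γ₂) C
  | bangR (Γ : List Fm) (B : Fm) :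
      BangL (Γ.map bang) B → BangL (Γ.map bang) (bang B)
  | perm1 (Δ₁ Γ Δ₂ : List Fm) (A C : Fm) :
      BangL (Δ₁ ++ bang A :: (Γ ++ Δ₂)) C → BangL (Δ₁ ++ Γ ++ bang A :: Δ₂) C
  | perm2 (Δ₁ Γ Δ₂ : List Fm) (A C : Fm) :
      BangL (Δ₁ ++ Γ ++ bang A :: Δ₂) C → BangL (Δ₁ ++ bang A :: (Γ ++ Δ₂)) C
  | contr (Δ₁ Δ₂ : List Fm) (A C : Fm) :
      BangL (Δ₁ ++ bang A :: bang A :: Δ₂) C → BangL (Δ₁ ++ bang A :: Δ₂) C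

/-- G_R: the formula (r/q)/p for each (B₁)-rule and r/(p/q) for each (B₂)-rule of R. -/
def GRset (R : Finset BRule) : Set Fm :=
  {F | ∃ p q r : ℕ,
    (BRule.b1 p q r ∈ R ∧ F = div (div (var r) (var q)) (var p)) ∨
    (BRule.b2 p q r ∈ R ∧ F = div (var r) (div (var p) (var q)))}

/-- A formula contains no occurrence of `!`. -/
def bangFree : Fm → Prop
  | var _ => True
  | div a b => bangFree a ∧ bangFree b
  | ldiv a b => bangFree a ∧ bangFree b
  | bang _ => False

/-- A formula contains no occurrence of `\` (left division). -/
def ldivFree : Fm → Prop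
  | var _ => True
  | div a b => ldivFree a ∧ ldivFree b
  | ldiv _ _ => False
  | bang a => ldivFree a

/-- Syntactic model: interpretation of formulas as sets of contexts. -/
def Den (R : Finset BRule) : Fm → Set (List Fm)
  | .var p => {Γ | LStarR R Γ (.var p)}
  | .div b a => {Γ | ∀ Δ ∈ Den R a, Γ ++ Δ ∈ Den R b}
  | .ldiv a b => {Γ | ∀ Δ ∈ Den R a, Δ ++ Γ ∈ Den R b}
  | .bang a => {Γ | Γ = [] ∧ [] ∈ Den R a}

theorem den_main (R : Finset BRule) : ∀ F : Fm, bangFree F →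
    (∀ Γ ∈ Den R F, LStarR R Γ F) ∧
    (∀ Θ : List Fm, (∀ X Y C, LStarR R (X ++ F :: Y) C → LStarR R (X ++ Θ ++ Y) C) →
      Θ ∈ Den R F) := by
  intro F
  induction F with
  | var p =>
      intro _
      refine ⟨fun Γ h => h, fun Θ hΘ => ?_⟩
      have := hΘ [] [] (var p) (LStarR.ax _)
      simpa [Den] using this
  | div b a ihb iha =>
      intro hF
      obtain ⟨hb, ha⟩ := hF
      obtain ⟨βb, εb⟩ := ihb hb
      obtain ⟨βa, εa⟩ := iha ha
      constructor
      · intro Γ hΓ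
        have hA : [a] ∈ Den R a := εa [a] (fun X Y C h => by simpa using h)
        have : Γ ++ [a] ∈ Den R b := hΓ [a] hA
        exact LStarR.divR _ _ _ (βb _ this)
      · intro Θ hΘ Δ hΔ
        apply εb
        intro X Y C h
        have h1 : LStarR R (X ++ div b a :: (Δ ++ Y)) C := LStarR.divL Δ X Y a b C (βa Δ hΔ) h
        have := hΘ X (Δ ++ Y) C h1
        simpa [List.append_assoc] using this
  | ldiv a b iha ihb =>
      intro hF
      obtain ⟨ha, hb⟩ := hF
      obtain ⟨βa, εa⟩ := iha ha
      obtain ⟨βb, εb⟩ := ihb hb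
      constructor
      · intro Γ hΓ
        have hA : [a] ∈ Den R a := εa [a] (fun X Y C h => by simpa using h)
        have : [a] ++ Γ ∈ Den R b := hΓ [a] hA
        exact LStarR.ldivR _ _ _ (βb _ this)
      · intro Θ hΘ Δ hΔ
        apply εb
        intro X Y C h
        have h1 : LStarR R (X ++ Δ ++ ldiv a b :: Y) C := LStarR.ldivL Δ X Y a b C (βa Δ hΔ) h
        have := hΘ (X ++ Δ) Y C (by simpa [List.append_assoc] using h1)
        simpa [List.append_assoc] using this
  | bang a ih =>
      intro hF
      exact absurd hF (by simp [bangFree])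

theorem den_single {R : Finset BRule} {F : Fm} (hF : bangFree F) : [F] ∈ Den R F :=
  (den_main R F hF).2 [F] (fun X Y C h => by simpa using h)

theorem den_derives {R : Finset BRule} {F : Fm} (hF : bangFree F) {Γ : List Fm}
    (h : Γ ∈ Den R F) : LStarR R Γ F := (den_main R F hF).1 Γ h

theorem den_GR {R : Finset BRule} {G : Fm} (hG : G ∈ GRset R) : [] ∈ Den R G := by
  obtain ⟨p, q, r, hG | hG⟩ := hG
  · obtain ⟨hmem, rfl⟩ := hG
    intro Δ hΔ Δ' hΔ'
    simp only [Den, Set.mem_setOf_eq] at hΔ hΔ' ⊢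
    simpa using LStarR.b1 p q r Δ Δ' hmem hΔ hΔ'
  · obtain ⟨hmem, rfl⟩ := hG
    intro Δ hΔ
    simp only [Den, Set.mem_setOf_eq]
    have hq : [var q] ∈ Den R (var q) := LStarR.ax _
    have := hΔ [var q] hq
    simp only [Den, Set.mem_setOf_eq] at this
    simpa using LStarR.b2 p q r Δ hmem this
/-- Satisfaction of a context by a splitting into denotation members. -/
def Sats (R : Finset BRule) : List Fm → List Fm → Prop
  | [], Δ => Δ = []
  | F :: Γ, Δ => ∃ d g, d ∈ Den R F ∧ Sats R Γ g ∧ Δ = d ++ g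

theorem sats_append {R : Finset BRule} : ∀ (X Y Δ : List Fm),
    Sats R (X ++ Y) Δ ↔ ∃ a b, Sats R X a ∧ Sats R Y b ∧ Δ = a ++ b := by
  intro X
  induction X with
  | nil =>
      intro Y Δ
      constructor
      · intro h; exact ⟨[], Δ, rfl, h, rfl⟩
      · rintro ⟨a, b, ha, hb, rfl⟩; rw [ha]; simpa using hb
  | cons F X ih =>
      intro Y Δ
      constructor
      · rintro ⟨d, g, hd, hg, rfl⟩
        obtain ⟨a, b, ha, hb, rfl⟩ := (ih Y g).1 hg
        exact ⟨d ++ a, b, ⟨d, a, hd, ha, rfl⟩, hb, by simp⟩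
      · rintro ⟨a, b, ha, hb, rfl⟩
        obtain ⟨d, g, hd, hg, rfl⟩ := ha
        exact ⟨d, g ++ b, hd, (ih Y (g ++ b)).2 ⟨g, b, hg, hb, rfl⟩, by simp⟩

theorem sats_bang_nil {R : Finset BRule} : ∀ (L Δ : List Fm),
    Sats R (L.map bang) Δ → Δ = [] := by
  intro L
  induction L with
  | nil => intro Δ h; exact h
  | cons a L ih =>
      rintro Δ ⟨d, g, hd, hg, rfl⟩
      obtain ⟨rfl, -⟩ := hd
      simp [ih g hg]

theorem bangl_sound {R : Finset BRule} {Γ : List Fm} {C : Fm} (h : BangL Γ C) :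
    ∀ Δ, Sats R Γ Δ → Δ ∈ Den R C := by
  induction h with
  | ax A =>
      rintro Δ ⟨d, g, hd, hg, rfl⟩
      cases hg
      simpa using hd
  | divL Γ Δ₁ Δ₂ A B C _ _ ih1 ih2 =>
      intro Δ hΔ
      rw [sats_append] at hΔ
      obtain ⟨a, b, ha, hb, rfl⟩ := hΔ
      obtain ⟨f, g, hf, hg, rfl⟩ := hb
      rw [sats_append] at hg
      obtain ⟨c, d, hc, hd, rfl⟩ := hg
      have hcA : c ∈ Den R A := ih1 c hc
      have hfc : f ++ c ∈ Den R B := hf c hcA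
      have : Sats R (Δ₁ ++ B :: Δ₂) (a ++ ((f ++ c) ++ d)) :=
        (sats_append _ _ _).2 ⟨a, (f ++ c) ++ d, ha, ⟨f ++ c, d, hfc, hd, rfl⟩, rfl⟩
      have := ih2 _ this
      simpa [List.append_assoc] using this
  | divR Γ A B _ ih =>
      intro Δ hΔ
      intro Δ' hΔ'
      apply ih
      rw [sats_append]
      exact ⟨Δ, Δ', hΔ, ⟨Δ', [], hΔ', rfl, by simp⟩, rfl⟩
  | ldivL Γ Δ₁ Δ₂ A B C _ _ ih1 ih2 =>
      intro Δ hΔ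
      rw [sats_append] at hΔ
      obtain ⟨a, b, ha, hb, rfl⟩ := hΔ
      rw [sats_append] at ha
      obtain ⟨a₁, c, ha₁, hc, rfl⟩ := ha
      obtain ⟨f, g, hf, hg, rfl⟩ := hb
      have hcA : c ∈ Den R A := ih1 c hc
      have hcf : c ++ f ∈ Den R B := hf c hcA
      have : Sats R (Δ₁ ++ B :: Δ₂) (a₁ ++ ((c ++ f) ++ g)) :=
        (sats_append _ _ _).2 ⟨a₁, (c ++ f) ++ g, ha₁, ⟨c ++ f, g, hcf, hg, rfl⟩, rfl⟩
      have := ih2 _ this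
      simpa [List.append_assoc] using this
  | ldivR Γ A B _ ih =>
      intro Δ hΔ
      intro Δ' hΔ'
      exact ih _ ⟨Δ', Δ, hΔ', hΔ, rfl⟩
  | bangL Γ₁ Γ₂ A C _ ih =>
      intro Δ hΔ
      rw [sats_append] at hΔ
      obtain ⟨a, b, ha, hb, rfl⟩ := hΔ
      obtain ⟨f, g, hf, hg, rfl⟩ := hb
      obtain ⟨rfl, hfA⟩ := hf
      apply ih
      rw [sats_append]
      exact ⟨a, [] ++ g, ha, ⟨[], g, hfA, hg, rfl⟩, rfl⟩
  | bangR Γ B _ ih =>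
      intro Δ hΔ
      have hnil := sats_bang_nil _ _ hΔ
      subst hnil
      exact ⟨rfl, ih _ hΔ⟩
  | perm1 Δ₁ Γ Δ₂ A C _ ih =>
      intro Δ hΔ
      rw [sats_append] at hΔ
      obtain ⟨a, b, ha, hb, rfl⟩ := hΔ
      rw [sats_append] at ha
      obtain ⟨a₁, c, ha₁, hc, rfl⟩ := ha
      obtain ⟨f, g, hf, hg, rfl⟩ := hb
      obtain ⟨rfl, hfA⟩ := hf
      apply ih
      rw [sats_append]
      refine ⟨a₁, [] ++ (c ++ g), ha₁, ⟨[], c ++ g, ⟨rfl, hfA⟩,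
        (sats_append _ _ _).2 ⟨c, g, hc, hg, rfl⟩, rfl⟩, by simp⟩
  | perm2 Δ₁ Γ Δ₂ A C _ ih =>
      intro Δ hΔ
      rw [sats_append] at hΔ
      obtain ⟨a, b, ha, hb, rfl⟩ := hΔ
      obtain ⟨f, g, hf, hg, rfl⟩ := hb
      obtain ⟨rfl, hfA⟩ := hf
      rw [sats_append] at hg
      obtain ⟨c, d, hc, hd, rfl⟩ := hg
      apply ih
      rw [sats_append]
      refine ⟨a ++ c, [] ++ d, (sats_append _ _ _).2 ⟨a, c, ha, hc, rfl⟩,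
        ⟨[], d, ⟨rfl, hfA⟩, hd, rfl⟩, by simp⟩
  | contr Δ₁ Δ₂ A C _ ih =>
      intro Δ hΔ
      rw [sats_append] at hΔ
      obtain ⟨a, b, ha, hb, rfl⟩ := hΔ
      obtain ⟨f, g, hf, hg, rfl⟩ := hb
      obtain ⟨rfl, hfA⟩ := hf
      apply ih
      rw [sats_append]
      exact ⟨a, [] ++ ([] ++ g), ha, ⟨[], [] ++ g, ⟨rfl, hfA⟩, ⟨[], g, ⟨rfl, hfA⟩, hg, rfl⟩, rfl⟩, by simp⟩

theorem stmt10_backward {R : Finset BRule} {Φ : List Fm} {A : Fm}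
    (hΦ : ∀ F ∈ Φ, bangFree F) (hA : bangFree A) {B : Finset Fm}
    (hB : ↑B ⊆ GRset R) (h : BangL (B.toList.map bang ++ Φ) A) : LStarR R Φ A := by
  have hsatsΦ : ∀ (Ψ : List Fm), (∀ F ∈ Ψ, bangFree F) → Sats R Ψ Ψ := by
    intro Ψ
    induction Ψ with
    | nil => intro _; exact rfl
    | cons F Ψ ih =>
        intro hΨ
        exact ⟨[F], Ψ, den_single (hΨ F (by simp)),
          ih (fun G hG => hΨ G (by simp [hG])), rfl⟩
  have hsatsB : ∀ (L : List Fm), (∀ G ∈ L, G ∈ GRset R) → Sats R (L.map bang) [] := by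
    intro L
    induction L with
    | nil => intro _; exact rfl
    | cons G L ih =>
        intro hL
        exact ⟨[], [], ⟨rfl, den_GR (hL G (by simp))⟩,
          ih (fun G' hG' => hL G' (by simp [hG'])), rfl⟩
  have hsats : Sats R (B.toList.map bang ++ Φ) Φ := by
    rw [sats_append]
    exact ⟨[], Φ, hsatsB _ (fun G hG => hB (by simpa using hG)), hsatsΦ Φ hΦ, rfl⟩
  exact den_derives hA (bangl_sound h Φ hsats)
theorem bang_toFront {Δ₁ Δ₂ : List Fm} {a C : Fm}
    (h : BangL (Δ₁ ++ bang a :: Δ₂) C) : BangL (bang a :: (Δ₁ ++ Δ₂)) C := by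
  have := BangL.perm2 [] Δ₁ Δ₂ a C (by simpa using h)
  simpa using this

theorem bang_fromFront {Δ₁ Δ₂ : List Fm} {a C : Fm}
    (h : BangL (bang a :: (Δ₁ ++ Δ₂)) C) : BangL (Δ₁ ++ bang a :: Δ₂) C := by
  have := BangL.perm1 [] Δ₁ Δ₂ a C (by simpa using h)
  simpa using this

theorem bangs_toFront {C : Fm} : ∀ (L Δ₁ Δ₂ : List Fm),
    BangL (Δ₁ ++ L.map bang ++ Δ₂) C → BangL (L.map bang ++ Δ₁ ++ Δ₂) C := by
  intro L
  induction L with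
  | nil => intro Δ₁ Δ₂ h; simpa using h
  | cons a L ih =>
      intro Δ₁ Δ₂ h
      have h1 : BangL (Δ₁ ++ bang a :: (L.map bang ++ Δ₂)) C := by
        simpa using h
      have h2 := bang_toFront h1
      have h3 : BangL ((bang a :: Δ₁) ++ L.map bang ++ Δ₂) C := by
        simpa using h2
      have h4 := ih (bang a :: Δ₁) Δ₂ h3
      have h5 : BangL (L.map bang ++ bang a :: (Δ₁ ++ Δ₂)) C := by
        simpa using h4
      have h6 := bang_toFront (Δ₁ := L.map bang) h5
      simpa using h6

theorem bangs_fromFront {C : Fm} : ∀ (L Δ₁ Δ₂ : List Fm),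
    BangL (L.map bang ++ (Δ₁ ++ Δ₂)) C → BangL (Δ₁ ++ L.map bang ++ Δ₂) C := by
  intro L
  induction L with
  | nil => intro Δ₁ Δ₂ h; simpa using h
  | cons a L ih =>
      intro Δ₁ Δ₂ h
      have h1 : BangL (bang a :: ((L.map bang ++ Δ₁) ++ Δ₂)) C := by
        simpa using h
      have h2 := bang_fromFront h1
      have h3 : BangL (L.map bang ++ (Δ₁ ++ bang a :: Δ₂)) C := by
        simpa using h2
      have h4 := ih Δ₁ (bang a :: Δ₂) h3
      have h5 := BangL.perm2 Δ₁ (L.map bang) Δ₂ a C h4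
      simpa using h5

theorem bangs_permFront {C : Fm} {L₁ L₂ : List Fm} (hp : L₁.Perm L₂) :
    ∀ Φ : List Fm, BangL (L₁.map bang ++ Φ) C → BangL (L₂.map bang ++ Φ) C := by
  induction hp with
  | nil => intro Φ h; exact h
  | cons a p ih =>
      intro Φ h
      rename_i l₁ l₂
      have h1 : BangL (bang a :: (l₁.map bang ++ Φ)) C := by simpa using h
      have h2 := bang_fromFront h1
      have h3 := ih (bang a :: Φ) h2
      have h4 := bang_toFront (Δ₁ := l₂.map bang) h3
      simpa using h4
  | swap a b l =>
      intro Φ h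
      have h1 : BangL ([bang b] ++ bang a :: (l.map bang ++ Φ)) C := by simpa using h
      have h2 := bang_toFront h1
      simpa using h2
  | trans p₁ p₂ ih₁ ih₂ =>
      intro Φ h
      exact ih₂ Φ (ih₁ Φ h)

theorem bangs_dedupFront {C : Fm} : ∀ (L Φ : List Fm),
    BangL (L.map bang ++ Φ) C → BangL (L.dedup.map bang ++ Φ) C := by
  intro L
  induction L with
  | nil => intro Φ h; simpa using h
  | cons a L ih =>
      intro Φ h
      by_cases hmem : a ∈ L
      · rw [List.dedup_cons_of_mem hmem]
        have hperm : (a :: L).Perm (a :: a :: L.erase a) :=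
          List.Perm.cons a (List.perm_cons_erase hmem)
        have h1 := bangs_permFront hperm Φ h
        have h2 : BangL ([] ++ bang a :: bang a :: ((L.erase a).map bang ++ Φ)) C := by
          simpa using h1
        have h3 := BangL.contr [] ((L.erase a).map bang ++ Φ) a C h2
        have h4 : BangL ((a :: L.erase a).map bang ++ Φ) C := by simpa using h3
        have h5 := bangs_permFront (List.perm_cons_erase hmem).symm Φ h4
        exact ih Φ h5
      · rw [List.dedup_cons_of_notMem hmem]
        have h1 : BangL (bang a :: (L.map bang ++ Φ)) C := by simpa using h
        have h2 := bang_fromFront h1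
        have h3 := ih (bang a :: Φ) h2
        have h4 := bang_toFront (Δ₁ := L.dedup.map bang) h3
        simpa using h4

theorem bangs_transfer {C : Fm} {Φ : List Fm} (L : List Fm) (B : Finset Fm)
    (hB : L.toFinset = B) (h : BangL (L.map bang ++ Φ) C) :
    BangL (B.toList.map bang ++ Φ) C := by
  have hperm : L.dedup.Perm B.toList := by
    apply List.perm_of_nodup_nodup_toFinset_eq (List.nodup_dedup L) (Finset.nodup_toList B)
    ext x
    simp [← hB]
  exact bangs_permFront hperm Φ (bangs_dedupFront L Φ h)
theorem stmt10_forward {R : Finset BRule} {Φ : List Fm} {A : Fm} (h : LStarR R Φ A) :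
    ∃ B : Finset Fm, ↑B ⊆ GRset R ∧ BangL (B.toList.map bang ++ Φ) A := by
  induction h with
  | ax A =>
      exact ⟨∅, by simp, by simpa using BangL.ax A⟩
  | divL Γ Δ₁ Δ₂ A B C _ _ ih1 ih2 =>
      obtain ⟨B₁, hB₁, h1⟩ := ih1
      obtain ⟨B₂, hB₂, h2⟩ := ih2
      refine ⟨B₁ ∪ B₂, ?_, ?_⟩
      · intro x hx
        simp only [Finset.coe_union, Set.mem_union] at hx
        rcases hx with hx | hx
        · exact hB₁ hx
        · exact hB₂ hx
      · have h2' : BangL ((B₂.toList.map bang ++ Δ₁) ++ B :: Δ₂) C := by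
          simpa [List.append_assoc] using h2
        have h3 := BangL.divL (B₁.toList.map bang ++ Γ) (B₂.toList.map bang ++ Δ₁) Δ₂ A B C h1 h2'
        have h4 : BangL (((B₂.toList.map bang ++ Δ₁) ++ [div B A]) ++
            B₁.toList.map bang ++ (Γ ++ Δ₂)) C := by
          simpa [List.append_assoc] using h3
        have h5 := bangs_toFront B₁.toList _ _ h4
        have h6 : BangL (B₁.toList.map bang ++ B₂.toList.map bang ++
            (Δ₁ ++ div B A :: (Γ ++ Δ₂))) C := by
          simpa [List.append_assoc] using h5
        have h7 := bangs_toFront B₂.toList _ _ h6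
        apply bangs_transfer (B₂.toList ++ B₁.toList) (B₁ ∪ B₂) (by ext x; simp [or_comm])
        simpa [List.append_assoc] using h7
  | divR Γ A B _ ih =>
      obtain ⟨B', hB', h1⟩ := ih
      refine ⟨B', hB', ?_⟩
      have h1' : BangL ((B'.toList.map bang ++ Γ) ++ [A]) B := by
        simpa [List.append_assoc] using h1
      exact BangL.divR _ _ _ h1'
  | ldivL Γ Δ₁ Δ₂ A B C _ _ ih1 ih2 =>
      obtain ⟨B₁, hB₁, h1⟩ := ih1
      obtain ⟨B₂, hB₂, h2⟩ := ih2
      refine ⟨B₁ ∪ B₂, ?_, ?_⟩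
      · intro x hx
        simp only [Finset.coe_union, Set.mem_union] at hx
        rcases hx with hx | hx
        · exact hB₁ hx
        · exact hB₂ hx
      · have h2' : BangL ((B₂.toList.map bang ++ Δ₁) ++ B :: Δ₂) C := by
          simpa [List.append_assoc] using h2
        have h3 := BangL.ldivL (B₁.toList.map bang ++ Γ) (B₂.toList.map bang ++ Δ₁) Δ₂ A B C h1 h2'
        have h4 : BangL ((B₂.toList.map bang ++ Δ₁) ++
            B₁.toList.map bang ++ (Γ ++ ldiv A B :: Δ₂)) C := by
          simpa [List.append_assoc] using h3
        have h5 := bangs_toFront B₁.toList _ _ h4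
        have h6 : BangL (B₁.toList.map bang ++ B₂.toList.map bang ++
            (Δ₁ ++ Γ ++ ldiv A B :: Δ₂)) C := by
          simpa [List.append_assoc] using h5
        have h7 := bangs_toFront B₂.toList _ _ h6
        apply bangs_transfer (B₂.toList ++ B₁.toList) (B₁ ∪ B₂) (by ext x; simp [or_comm])
        simpa [List.append_assoc] using h7
  | ldivR Γ A B _ ih =>
      obtain ⟨B', hB', h1⟩ := ih
      refine ⟨B', hB', ?_⟩
      have h1' : BangL (B'.toList.map bang ++ ([A] ++ Γ)) B := by
        simpa using h1
      have h2 := bangs_fromFront B'.toList [A] Γ h1'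
      have h3 : BangL (A :: (B'.toList.map bang ++ Γ)) B := by
        simpa using h2
      exact BangL.ldivR _ _ _ h3
  | b1 p q r Φ₁ Φ₂ hmem _ _ ih1 ih2 =>
      obtain ⟨B₁, hB₁, h1⟩ := ih1
      obtain ⟨B₂, hB₂, h2⟩ := ih2
      refine ⟨insert (div (div (var r) (var q)) (var p)) (B₁ ∪ B₂), ?_, ?_⟩
      · intro x hx
        simp only [Finset.coe_insert, Finset.coe_union, Set.mem_insert_iff,
          Set.mem_union] at hx
        rcases hx with rfl | hx | hx
        · exact ⟨p, q, r, Or.inl ⟨hmem, rfl⟩⟩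
        · exact hB₁ hx
        · exact hB₂ hx
      · have inner := BangL.divL (B₂.toList.map bang ++ Φ₂) [] [] (var q) (var r) (var r)
          h2 (BangL.ax (var r))
        have inner' : BangL ([] ++ div (var r) (var q) :: (B₂.toList.map bang ++ Φ₂))
            (var r) := by simpa using inner
        have outer := BangL.divL (B₁.toList.map bang ++ Φ₁) [] (B₂.toList.map bang ++ Φ₂)
          (var p) (div (var r) (var q)) (var r) h1 inner'
        have hcut : BangL ([] ++ div (div (var r) (var q)) (var p) ::
            (B₁.toList.map bang ++ Φ₁ ++ B₂.toList.map bang ++ Φ₂)) (var r) := by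
          simpa [List.append_assoc] using outer
        have hbang := BangL.bangL [] _ _ (var r) hcut
        have hb1 : BangL ((bang (div (div (var r) (var q)) (var p)) ::
            B₁.toList.map bang ++ Φ₁) ++ B₂.toList.map bang ++ Φ₂) (var r) := by
          simpa [List.append_assoc] using hbang
        have hb2 := bangs_toFront B₂.toList _ _ hb1
        have hb3 : BangL (B₂.toList.map bang ++
            (bang (div (div (var r) (var q)) (var p)) :: B₁.toList.map bang) ++
            (Φ₁ ++ Φ₂)) (var r) := by
          simpa [List.append_assoc] using hb2
        have hb4 := bangs_toFront (div (div (var r) (var q)) (var p) :: B₁.toList)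
          (B₂.toList.map bang) (Φ₁ ++ Φ₂) (by simpa using hb3)
        apply bangs_transfer ((div (div (var r) (var q)) (var p) :: B₁.toList) ++ B₂.toList)
          _ (by ext x; simp)
        simpa [List.append_assoc] using hb4
  | b2 p q r Φ' hmem _ ih =>
      obtain ⟨B', hB', h1⟩ := ih
      refine ⟨insert (div (var r) (div (var p) (var q))) B', ?_, ?_⟩
      · intro x hx
        simp only [Finset.coe_insert, Set.mem_insert_iff] at hx
        rcases hx with rfl | hx
        · exact ⟨p, q, r, Or.inr ⟨hmem, rfl⟩⟩
        · exact hB' hx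
      · have h1' : BangL ((B'.toList.map bang ++ Φ') ++ [var q]) (var p) := by
          simpa [List.append_assoc] using h1
        have h2 := BangL.divR _ _ _ h1'
        have h3 := BangL.divL (B'.toList.map bang ++ Φ') [] [] (div (var p) (var q))
          (var r) (var r) h2 (BangL.ax (var r))
        have h4 : BangL ([] ++ div (var r) (div (var p) (var q)) ::
            (B'.toList.map bang ++ Φ')) (var r) := by
          simpa using h3
        have h5 := BangL.bangL [] _ _ (var r) h4
        apply bangs_transfer (div (var r) (div (var p) (var q)) :: B'.toList)
          _ (by ext x; simp)
        simpa using h5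

/-- Deduction-style embedding: L* + R derives Φ → A iff there is B ⊆ G_R such
that !L* derives !B, Φ → A (for !-free Φ, A). -/
theorem stmt10 (R : Finset BRule) (Φ : List Fm) (A : Fm)
    (hΦ : ∀ F ∈ Φ, bangFree F) (hA : bangFree A) :
    LStarR R Φ A ↔
      ∃ B : Finset Fm, ↑B ⊆ GRset R ∧ BangL (B.toList.map bang ++ Φ) A := by
  constructor
  · exact stmt10_forward
  · rintro ⟨B, hB, h⟩
    exact stmt10_backward hΦ hA hB h
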